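/- arXiv:2410.10109 — 2 statements merged into one kernel-verified Lean document; each statement's English description precedes it below -/
import Mathlib

section
/- Let g : ℝⁿ → ℝⁿ be twice continuously differentiable, and for each pair of indices i, j let Δ_{ij}(x) be the (i,j) cofactor of the Jacobian matrix of g at x, i.e. Δ_{ij} = (−1)^{i+j} times the determinant of the (n−1)×(n−1) matrix obtained from the matrix (∂g_a/∂x_b)_{a,b=1..n} by deleting row i and column j. Then for every index i and every point x ∈ ℝⁿ, ∑_{j=1}^{n} ∂Δ_{ij}/∂x_j (x) = 0. -/
noncomputable section

open scoped BigOperators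

/-- Partial derivative of `f` in the `i`-th coordinate direction at `x`. -/
def pd {n : ℕ} (i : Fin n) (f : (Fin n → ℝ) → ℝ) (x : Fin n → ℝ) : ℝ :=
  fderiv ℝ f x (Pi.single i 1)

/-- Jacobian matrix of `g : ℝⁿ → ℝⁿ` at `x`: entries `(∂g_a/∂x_b)(x)`. -/
def jacobianMatrix {n : ℕ} (g : (Fin n → ℝ) → (Fin n → ℝ)) (x : Fin n → ℝ) :
    Matrix (Fin n) (Fin n) ℝ :=
  Matrix.of fun a b => pd b (fun y => g y a) x

/-- The `(i,j)` cofactor of the Jacobian matrix of `g` at `x`: `(-1)^(i+j)` times the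
determinant of the matrix obtained by deleting row `i` and column `j`. -/
def jacCofactor {n : ℕ} (g : (Fin (n + 1) → ℝ) → (Fin (n + 1) → ℝ))
    (i j : Fin (n + 1)) (x : Fin (n + 1) → ℝ) : ℝ :=
  (-1 : ℝ) ^ ((i : ℕ) + (j : ℕ)) *
    (Matrix.of fun a b : Fin n =>
      jacobianMatrix g x (i.succAbove a) (j.succAbove b)).det

/-!
The `(i, j)` cofactor is the determinant of the Jacobian with row `i` replaced by `e_j`. Since the
determinant is multilinear in the rows, differentiating along `e_j` and summing over `j` leaves, for
each `k ≠ i`, the sum `∑ j l, ∂ⱼ∂ₗ gₖ · det (J with row i ← e_j, row k ← e_l)`. The Hessian of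
`gₖ` is symmetric in `(j, l)` while the determinant is antisymmetric (swap rows `i` and `k`),
so every such sum vanishes.
-/

open Finset Function

theorem fderiv_fderiv_apply_comm {𝕜 E F : Type*} [RCLike 𝕜] [NormedAddCommGroup E]
    [NormedSpace 𝕜 E] [NormedAddCommGroup F] [NormedSpace 𝕜 F] {f : E → F} {x : E}
    (hf : ContDiffAt 𝕜 2 f x) (v w : E) :
    fderiv 𝕜 (fun y => fderiv 𝕜 f y v) x w = fderiv 𝕜 (fun y => fderiv 𝕜 f y w) x v := by
  have hdf : DifferentiableAt 𝕜 (fderiv 𝕜 f) x :=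
    (hf.fderiv_right (m := 1) le_rfl).differentiableAt one_ne_zero
  rw [fderiv_clm_apply hdf (differentiableAt_const v),
    fderiv_clm_apply hdf (differentiableAt_const w)]
  simpa using hf.isSymmSndFDerivAt (by simp) w v

theorem fderiv_det_apply {𝕜 E m : Type*} [NontriviallyNormedField 𝕜] [NormedAddCommGroup E]
    [NormedSpace 𝕜 E] [Fintype m] [DecidableEq m] {A : E → Matrix m m 𝕜} {x : E}
    (hA : ∀ k l, DifferentiableAt 𝕜 (fun y => A y k l) x) (v : E) :
    fderiv 𝕜 (fun y => (A y).det) x v =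
      ∑ k, ((A x).updateRow k fun l => fderiv 𝕜 (fun y => A y k l) x v).det := by
  let D : ContinuousMultilinearMap 𝕜 (fun _ : m => m → 𝕜) 𝕜 :=
    { Matrix.detRowAlternating.toMultilinearMap with cont := continuous_id.matrix_det }
  have hrow : ∀ k, DifferentiableAt 𝕜 (fun y l => A y k l) x := fun k =>
    differentiableAt_pi.2 (hA k)
  have hD : HasFDerivAt (fun y => D fun k l => A y k l)
      ((D.linearDeriv fun k l => A x k l).comp (fderiv 𝕜 (fun y k l => A y k l) x)) x :=
    (D.hasFDerivAt _).comp x (differentiableAt_pi.2 hrow).hasFDerivAt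
  change fderiv 𝕜 (fun y => D fun k l => A y k l) x v = _
  rw [hD.fderiv, ContinuousLinearMap.comp_apply, ContinuousMultilinearMap.linearDeriv_apply,
    fderiv_pi hrow]
  simp only [ContinuousLinearMap.pi_apply, fderiv_pi (hA _)]
  rfl

theorem Matrix.IsSymm.sum_sum_smul_eq_zero {R N m : Type*} [Semiring R] [AddCommGroup N]
    [Module R N] [Fintype m] {S : Matrix m m R} (hS : S.IsSymm) {F : m → m → N}
    (hF : ∀ j l, F l j = -F j l) (hF₀ : ∀ j, F j j = 0) :
    ∑ j, ∑ l, S j l • F j l = 0 := by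
  rw [← Fintype.sum_prod_type']
  refine Finset.sum_ninvolution Prod.swap (fun p => ?_) (fun p hp hswap => ?_)
    (fun _ => mem_univ _) Prod.swap_swap
  · rw [Prod.fst_swap, Prod.snd_swap, hS.apply, hF, smul_neg, neg_add_cancel]
  · obtain ⟨j, l⟩ := p
    obtain rfl : l = j := congrArg Prod.fst hswap
    exact hp (by rw [hF₀, smul_zero])

theorem AlternatingMap.sum_map_update_update_eq_zero {R M N ι m : Type*} [Semiring R]
    [AddCommMonoid M] [Module R M] [AddCommGroup N] [Module R N] [DecidableEq ι] [Fintype m]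
    (f : M [⋀^ι]→ₗ[R] N) (v : ι → M) {i k : ι} (hik : i ≠ k) (e : m → M)
    {S : Matrix m m R} (hS : S.IsSymm) :
    ∑ j, f (update (update v i (e j)) k (∑ l, S j l • e l)) = 0 := by
  simp only [f.map_update_sum, f.map_update_smul]
  refine hS.sum_sum_smul_eq_zero (fun j l => ?_) (fun j => ?_)
  · rw [← f.map_swap _ hik]
    congr 1
    ext a
    simp only [comp_apply, Equiv.swap_apply_def, update_apply]
    split_ifs <;> simp_all
  · exact f.map_eq_zero_of_eq _ (by simp [hik]) hik

theorem Matrix.sum_det_updateRow_updateRow_eq_zero {R m : Type*} [CommRing R] [Fintype m]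
    [DecidableEq m] (M : Matrix m m R) {i k : m} (hik : i ≠ k) {S : Matrix m m R}
    (hS : S.IsSymm) :
    ∑ j, ((M.updateRow i (Pi.single j 1)).updateRow k (S j)).det = 0 := by
  conv_lhs => arg 2; ext j; rw [pi_eq_sum_univ' (S j)]
  exact detRowAlternating.sum_map_update_update_eq_zero M hik _ hS

def hessianMatrix {n : ℕ} (f : (Fin n → ℝ) → ℝ) (x : Fin n → ℝ) : Matrix (Fin n) (Fin n) ℝ :=
  Matrix.of fun j l => pd j (pd l f) x

theorem isSymm_hessianMatrix {n : ℕ} {f : (Fin n → ℝ) → ℝ} {x : Fin n → ℝ}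
    (hf : ContDiffAt ℝ 2 f x) : (hessianMatrix f x).IsSymm :=
  Matrix.IsSymm.ext fun _ _ => fderiv_fderiv_apply_comm hf _ _

theorem jacCofactor_eq_det_updateRow {n : ℕ} (g : (Fin (n + 1) → ℝ) → (Fin (n + 1) → ℝ))
    (i j : Fin (n + 1)) (x : Fin (n + 1) → ℝ) :
    jacCofactor g i j x = ((jacobianMatrix g x).updateRow i (Pi.single j 1)).det := by
  rw [← Matrix.adjugate_apply, Matrix.adjugate_fin_succ_eq_det_submatrix]
  rfl

theorem contDiff_jacobianMatrix_apply {n : ℕ} {g : (Fin n → ℝ) → (Fin n → ℝ)}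
    (hg : ContDiff ℝ 2 g) (k l : Fin n) : ContDiff ℝ 1 fun y => jacobianMatrix g y k l :=
  (((contDiff_apply ℝ ℝ k).comp hg).fderiv_right (m := 1) le_rfl).clm_apply contDiff_const

theorem pd_jacCofactor {n : ℕ} {g : (Fin (n + 1) → ℝ) → (Fin (n + 1) → ℝ)}
    (hg : ContDiff ℝ 2 g) (i j : Fin (n + 1)) (x : Fin (n + 1) → ℝ) :
    pd j (fun y => jacCofactor g i j y) x =
      ∑ k ∈ univ.erase i, (((jacobianMatrix g x).updateRow i (Pi.single j 1)).updateRow k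
        (hessianMatrix (fun y => g y k) x j)).det := by
  have hentry : ∀ k l, DifferentiableAt ℝ
      (fun y => (jacobianMatrix g y).updateRow i (Pi.single j 1) k l) x := by
    intro k l
    rcases eq_or_ne k i with rfl | hki
    · simp
    · simpa [hki] using ((contDiff_jacobianMatrix_apply hg k l).differentiable one_ne_zero) x
  simp only [pd, jacCofactor_eq_det_updateRow]
  rw [fderiv_det_apply hentry, ← add_sum_erase _ _ (mem_univ i)]
  rw [Matrix.det_eq_zero_of_row_eq_zero i (by simp), zero_add]
  refine sum_congr rfl fun k hk => ?_
  simp only [Matrix.updateRow_ne (ne_of_mem_erase hk)]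
  rfl

/-- Jacobi's fundamental lemma (Piola identity): each row of cofactors of the
Jacobian matrix of a C² map is divergence-free. -/
theorem piola_identity {n : ℕ} (g : (Fin (n + 1) → ℝ) → (Fin (n + 1) → ℝ))
    (hg : ContDiff ℝ 2 g) (i : Fin (n + 1)) (x : Fin (n + 1) → ℝ) :
    ∑ j, pd j (fun y => jacCofactor g i j y) x = 0 := by
  simp only [pd_jacCofactor hg]
  rw [sum_comm]
  refine sum_eq_zero fun k hk => ?_
  exact Matrix.sum_det_updateRow_updateRow_eq_zero _ (ne_of_mem_erase hk).symm
    (isSymm_hessianMatrix ((contDiff_apply ℝ ℝ k).comp hg).contDiffAt)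
end
end

section
/- Define on ℝ³ the antisymmetric matrix fields P'₁, P'₂, P'₃ with nonzero upper-triangular entries (P'₁)₁₂ = −b₂M₃, (P'₁)₁₃ = −b₃M₂; (P'₂)₁₂ = b₁M₃, (P'₂)₂₃ = −b₃M₁; (P'₃)₁₃ = b₁M₂, (P'₃)₂₃ = b₂M₁ (all other upper entries zero, lower entries by antisymmetry), where b₁ = a₂−a₃, b₂ = a₃−a₁, b₃ = a₁−a₂. Then: (a) b₁P'₁ + b₂P'₂ + b₃P'₃ = 0 identically; (b) for the Euler vector field X = (b₁M₂M₃, b₂M₃M₁, b₃M₁M₂) and f₁ = ½(a₁M₁² + a₂M₂² + a₃M₃²), f₂ = M₁² + M₂² + M₃², one has P'_i∇f₁ = a_i X and P'_i∇f₂ = 2X for each i = 1,2,3, where (P∇f)_j = ∑_k P_{jk} ∂f/∂M_k; (c) for all λ₁, λ₂, λ₃ ∈ ℝ the combination λ₁P'₁ + λ₂P'₂ + λ₃P'₃ satisfies the Jacobi identity ∑_l ( P_{li} ∂P_{jk}/∂M_l + P_{lj} ∂P_{ki}/∂M_l + P_{lk} ∂P_{ij}/∂M_l ) = 0. -/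
noncomputable section

open scoped BigOperators

/-- The Euler vector field `X = (b₁M₂M₃, b₂M₃M₁, b₃M₁M₂)` on `ℝ³`, where
`b₁ = a₂ − a₃`, `b₂ = a₃ − a₁`, `b₃ = a₁ − a₂`. -/
def eulerX (a₁ a₂ a₃ : ℝ) (x : Fin 3 → ℝ) : Fin 3 → ℝ :=
  ![(a₂ - a₃) * x 1 * x 2, (a₃ - a₁) * x 2 * x 0, (a₁ - a₂) * x 0 * x 1]

/-- The first integral `f₁ = ½(a₁M₁² + a₂M₂² + a₃M₃²)`. -/
def eulerF₁ (a₁ a₂ a₃ : ℝ) (x : Fin 3 → ℝ) : ℝ :=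
  (a₁ * x 0 ^ 2 + a₂ * x 1 ^ 2 + a₃ * x 2 ^ 2) / 2

/-- The first integral `f₂ = M₁² + M₂² + M₃²`. -/
def eulerF₂ (x : Fin 3 → ℝ) : ℝ := x 0 ^ 2 + x 1 ^ 2 + x 2 ^ 2

/-- Contraction of a matrix field with the gradient of a function:
`(P∇f)_i = ∑_j P_{ij} ∂f/∂x_j`. -/
def Pgrad {n : ℕ} (P : (Fin n → ℝ) → Matrix (Fin n) (Fin n) ℝ)
    (f : (Fin n → ℝ) → ℝ) (x : Fin n → ℝ) (i : Fin n) : ℝ :=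
  ∑ j, P x i j * pd j f x

/-- Lie derivative of a (2,0) tensor (matrix field) `P` along the vector field `X`:
`(L_X P)_{ij} = ∑_k (X_k ∂P_{ij}/∂x_k − P_{kj} ∂X_i/∂x_k − P_{ik} ∂X_j/∂x_k)`. -/
def matLie {n : ℕ} (X : (Fin n → ℝ) → Fin n → ℝ)
    (P : (Fin n → ℝ) → Matrix (Fin n) (Fin n) ℝ) (x : Fin n → ℝ) (i j : Fin n) : ℝ :=
  ∑ k, (X x k * pd k (fun y => P y i j) x - P x k j * pd k (fun y => X y i) x
        - P x i k * pd k (fun y => X y j) x)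

/-- The Jacobiator of an antisymmetric matrix field; it vanishes identically iff `P`
satisfies the Jacobi identity (i.e. is a Poisson bivector). -/
def jacobiator {n : ℕ} (P : (Fin n → ℝ) → Matrix (Fin n) (Fin n) ℝ)
    (x : Fin n → ℝ) (i j k : Fin n) : ℝ :=
  ∑ l, (P x l i * pd l (fun y => P y j k) x + P x l j * pd l (fun y => P y k i) x
        + P x l k * pd l (fun y => P y i j) x)

/-- The invariant bivector `P'₁` of the Euler case, with upper entries
`(P'₁)₁₂ = −b₂M₃`, `(P'₁)₁₃ = −b₃M₂` (`b₂ = a₃ − a₁`, `b₃ = a₁ − a₂`). -/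
def eulerP'₁ (a₁ a₂ a₃ : ℝ) (x : Fin 3 → ℝ) : Matrix (Fin 3) (Fin 3) ℝ :=
  !![0, -((a₃ - a₁) * x 2), -((a₁ - a₂) * x 1);
     (a₃ - a₁) * x 2, 0, 0;
     (a₁ - a₂) * x 1, 0, 0]

/-- The invariant bivector `P'₂`, with upper entries `(P'₂)₁₂ = b₁M₃`,
`(P'₂)₂₃ = −b₃M₁` (`b₁ = a₂ − a₃`, `b₃ = a₁ − a₂`). -/
def eulerP'₂ (a₁ a₂ a₃ : ℝ) (x : Fin 3 → ℝ) : Matrix (Fin 3) (Fin 3) ℝ :=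
  !![0, (a₂ - a₃) * x 2, 0;
     -((a₂ - a₃) * x 2), 0, -((a₁ - a₂) * x 0);
     0, (a₁ - a₂) * x 0, 0]

/-- The invariant bivector `P'₃`, with upper entries `(P'₃)₁₃ = b₁M₂`,
`(P'₃)₂₃ = b₂M₁` (`b₁ = a₂ − a₃`, `b₂ = a₃ − a₁`). -/
def eulerP'₃ (a₁ a₂ a₃ : ℝ) (x : Fin 3 → ℝ) : Matrix (Fin 3) (Fin 3) ℝ :=
  !![0, 0, (a₂ - a₃) * x 1;
     0, 0, (a₃ - a₁) * x 0;
     -((a₂ - a₃) * x 1), -((a₃ - a₁) * x 0), 0]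

/-!
Each `P'ᵢ` is the cross-product matrix `w ↦ vᵢ × w` of the gradient field
`vᵢ = ∇f₁ − aᵢ M = ∇(f₁ − aᵢ f₂ / 2)`, and `X = ∇f₁ × M`. Part (a) is then the linear relation
`∑ bᵢ vᵢ = 0`, which holds because `∑ bᵢ = ∑ aᵢ bᵢ = 0`, and part (b) follows from `u × u = 0`
and antisymmetry of `×`. For (c), any combination `∑ λᵢ P'ᵢ` is the cross-product matrix of a
diagonal linear field `v = c * M`; in dimension three the Jacobi identity for `w ↦ v × w` reduces
to `v · curl v = 0`, and a diagonal linear field is curl-free.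
-/

open Matrix

lemma pd_fun_neg {n : ℕ} (l : Fin n) (f : (Fin n → ℝ) → ℝ) (x : Fin n → ℝ) :
    pd l (fun y => -f y) x = -pd l f x := by
  simp [pd]

lemma pd_const {n : ℕ} (l : Fin n) (c : ℝ) (x : Fin n → ℝ) :
    pd l (fun _ => c) x = 0 := by
  simp [pd]

lemma pd_const_mul_apply {n : ℕ} (l m : Fin n) (c : ℝ) (x : Fin n → ℝ) :
    pd l (fun y => c * y m) x = if m = l then c else 0 := by
  rw [pd, ((hasFDerivAt_apply m x).const_mul c).fderiv]
  simp [Pi.single_apply]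

lemma pd_sum_mul_sq {n : ℕ} (l : Fin n) (c : Fin n → ℝ) (x : Fin n → ℝ) :
    pd l (fun y => ∑ m, c m * y m ^ 2) x = c l * (2 * x l) := by
  have h := HasFDerivAt.fun_sum (u := Finset.univ) fun m _ =>
    ((hasFDerivAt_apply (𝕜 := ℝ) m x).pow (f := fun y : Fin n → ℝ => y m) 2).const_mul (c m)
  rw [pd, h.fderiv]
  simp [Pi.single_apply]

section CrossMatrix

variable {R : Type*} [CommRing R]

def crossMatrix : (Fin 3 → R) →ₗ[R] Matrix (Fin 3) (Fin 3) R where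
  toFun v := !![0, -v 2, v 1; v 2, 0, -v 0; -v 1, v 0, 0]
  map_add' v w := by ext i j; fin_cases i <;> fin_cases j <;> simp <;> ring
  map_smul' c v := by ext i j; fin_cases i <;> fin_cases j <;> simp

lemma crossMatrix_mulVec (v w : Fin 3 → R) : crossMatrix v *ᵥ w = v ⨯₃ w := by
  ext i
  fin_cases i <;> simp [crossMatrix, cross_apply, mulVec, dotProduct, Fin.sum_univ_three] <;> ring

end CrossMatrix

lemma pd_crossMatrix_apply (l : Fin 3) (v : (Fin 3 → ℝ) → Fin 3 → ℝ) (x : Fin 3 → ℝ)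
    (j k : Fin 3) :
    pd l (fun y => crossMatrix (v y) j k) x =
      crossMatrix (fun m => pd l (fun y => v y m) x) j k := by
  fin_cases j <;> fin_cases k <;> simp [crossMatrix, pd_fun_neg, pd_const]

def curl (v : (Fin 3 → ℝ) → Fin 3 → ℝ) (x : Fin 3 → ℝ) : Fin 3 → ℝ :=
  ![pd 1 (fun y => v y 2) x - pd 2 (fun y => v y 1) x,
    pd 2 (fun y => v y 0) x - pd 0 (fun y => v y 2) x,
    pd 0 (fun y => v y 1) x - pd 1 (fun y => v y 0) x]

/-- For pairwise distinct `i j k` the Jacobiator of `w ↦ v × w` is `±(v · curl v)`; for the other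
index triples it vanishes identically. -/
theorem jacobiator_crossMatrix_eq_zero {v : (Fin 3 → ℝ) → Fin 3 → ℝ} {x : Fin 3 → ℝ}
    (hv : v x ⬝ᵥ curl v x = 0) (i j k : Fin 3) :
    jacobiator (fun y => crossMatrix (v y)) x i j k = 0 := by
  simp only [dotProduct, curl, Fin.sum_univ_three, cons_val_zero, cons_val_one, cons_val_two,
    tail_cons, head_cons] at hv
  simp only [jacobiator, pd_crossMatrix_apply, Fin.sum_univ_three]
  fin_cases i <;> fin_cases j <;> fin_cases k <;> simp [crossMatrix] <;>
    first | ring1 | linear_combination hv | linear_combination -hv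

lemma curl_mul_eq_zero (c x : Fin 3 → ℝ) : curl (fun y => c * y) x = 0 := by
  ext m; fin_cases m <;> simp [curl, pd_const_mul_apply]

lemma Pgrad_crossMatrix {v : (Fin 3 → ℝ) → Fin 3 → ℝ} (f : (Fin 3 → ℝ) → ℝ) (x : Fin 3 → ℝ) :
    Pgrad (fun y => crossMatrix (v y)) f x = v x ⨯₃ fun j => pd j f x := by
  rw [← crossMatrix_mulVec]; rfl

section Euler

variable (a₁ a₂ a₃ : ℝ)

lemma gradient_eulerF₁ (x : Fin 3 → ℝ) :
    (fun j => pd j (eulerF₁ a₁ a₂ a₃) x) = ![a₁, a₂, a₃] * x := by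
  have hF : eulerF₁ a₁ a₂ a₃ = fun y => ∑ m, (![a₁, a₂, a₃] m / 2) * y m ^ 2 := by
    funext y
    simp only [eulerF₁, Fin.sum_univ_three, cons_val_zero, cons_val_one, cons_val_two, tail_cons,
      head_cons]
    ring
  ext j
  rw [hF, pd_sum_mul_sq, Pi.mul_apply]
  ring

lemma gradient_eulerF₂ (x : Fin 3 → ℝ) : (fun j => pd j eulerF₂ x) = (2 : ℝ) • x := by
  have hF : eulerF₂ = fun y => ∑ m, 1 * y m ^ 2 := by
    funext y; simp [eulerF₂, Fin.sum_univ_three]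
  ext j
  rw [hF, pd_sum_mul_sq, Pi.smul_apply, smul_eq_mul]
  ring

lemma eulerX_eq_cross (x : Fin 3 → ℝ) : eulerX a₁ a₂ a₃ x = (![a₁, a₂, a₃] * x) ⨯₃ x := by
  ext m; fin_cases m <;> simp [eulerX, cross_apply] <;> ring

lemma eulerP'₁_eq_crossMatrix :
    eulerP'₁ a₁ a₂ a₃ = fun x => crossMatrix (![a₁, a₂, a₃] * x - a₁ • x) := by
  funext x; ext i j; fin_cases i <;> fin_cases j <;> simp [eulerP'₁, crossMatrix] <;> ring

lemma eulerP'₂_eq_crossMatrix :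
    eulerP'₂ a₁ a₂ a₃ = fun x => crossMatrix (![a₁, a₂, a₃] * x - a₂ • x) := by
  funext x; ext i j; fin_cases i <;> fin_cases j <;> simp [eulerP'₂, crossMatrix] <;> ring

lemma eulerP'₃_eq_crossMatrix :
    eulerP'₃ a₁ a₂ a₃ = fun x => crossMatrix (![a₁, a₂, a₃] * x - a₃ • x) := by
  funext x; ext i j; fin_cases i <;> fin_cases j <;> simp [eulerP'₃, crossMatrix] <;> ring

lemma Pgrad_crossMatrix_eulerF₁ (c : ℝ) (x : Fin 3 → ℝ) :
    Pgrad (fun y => crossMatrix (![a₁, a₂, a₃] * y - c • y)) (eulerF₁ a₁ a₂ a₃) x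
      = c • eulerX a₁ a₂ a₃ x := by
  rw [Pgrad_crossMatrix, gradient_eulerF₁, eulerX_eq_cross, map_sub, map_smul,
    LinearMap.sub_apply, LinearMap.smul_apply, cross_self, ← cross_anticomm]
  module

lemma Pgrad_crossMatrix_eulerF₂ (c : ℝ) (x : Fin 3 → ℝ) :
    Pgrad (fun y => crossMatrix (![a₁, a₂, a₃] * y - c • y)) eulerF₂ x
      = (2 : ℝ) • eulerX a₁ a₂ a₃ x := by
  rw [Pgrad_crossMatrix, gradient_eulerF₂, eulerX_eq_cross]
  simp only [map_sub, map_smul, LinearMap.sub_apply, LinearMap.smul_apply, cross_self, smul_zero,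
    sub_zero]

lemma eulerP'_linear_relation (x : Fin 3 → ℝ) :
    (a₂ - a₃) • eulerP'₁ a₁ a₂ a₃ x + (a₃ - a₁) • eulerP'₂ a₁ a₂ a₃ x
      + (a₁ - a₂) • eulerP'₃ a₁ a₂ a₃ x = 0 := by
  have hv : (a₂ - a₃) • (![a₁, a₂, a₃] * x - a₁ • x) + (a₃ - a₁) • (![a₁, a₂, a₃] * x - a₂ • x)
      + (a₁ - a₂) • (![a₁, a₂, a₃] * x - a₃ • x) = 0 := by
    module
  rw [eulerP'₁_eq_crossMatrix, eulerP'₂_eq_crossMatrix, eulerP'₃_eq_crossMatrix]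
  simpa only [map_add, map_smul, map_zero] using congrArg crossMatrix hv

lemma jacobiator_eulerP'_combination (l₁ l₂ l₃ : ℝ) (x : Fin 3 → ℝ) (i j k : Fin 3) :
    jacobiator (fun y => l₁ • eulerP'₁ a₁ a₂ a₃ y + l₂ • eulerP'₂ a₁ a₂ a₃ y
      + l₃ • eulerP'₃ a₁ a₂ a₃ y) x i j k = 0 := by
  set c : Fin 3 → ℝ := fun m =>
    l₁ * (![a₁, a₂, a₃] m - a₁) + l₂ * (![a₁, a₂, a₃] m - a₂) + l₃ * (![a₁, a₂, a₃] m - a₃)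
  have hv (y : Fin 3 → ℝ) : l₁ • (![a₁, a₂, a₃] * y - a₁ • y) + l₂ • (![a₁, a₂, a₃] * y - a₂ • y)
      + l₃ • (![a₁, a₂, a₃] * y - a₃ • y) = c * y := by
    ext m
    simp only [c, Pi.add_apply, Pi.smul_apply, Pi.sub_apply, Pi.mul_apply, smul_eq_mul]
    ring
  rw [eulerP'₁_eq_crossMatrix, eulerP'₂_eq_crossMatrix, eulerP'₃_eq_crossMatrix]
  simp only [← map_smul, ← map_add, hv]
  exact jacobiator_crossMatrix_eq_zero (by rw [curl_mul_eq_zero, dotProduct_zero]) i j k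

end Euler

/-- The frame of invariant bivectors `P'₁, P'₂, P'₃` of the Euler case:
(a) `b₁P'₁ + b₂P'₂ + b₃P'₃ = 0`; (b) `P'_i∇f₁ = a_i X` and `P'_i∇f₂ = 2X` for each `i`;
(c) every real linear combination `λ₁P'₁ + λ₂P'₂ + λ₃P'₃` satisfies the Jacobi identity. -/
theorem euler_bivector_frame (a₁ a₂ a₃ : ℝ) :
    (∀ x : Fin 3 → ℝ,
      (a₂ - a₃) • eulerP'₁ a₁ a₂ a₃ x + (a₃ - a₁) • eulerP'₂ a₁ a₂ a₃ x
        + (a₁ - a₂) • eulerP'₃ a₁ a₂ a₃ x = 0) ∧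
    (∀ x i, Pgrad (eulerP'₁ a₁ a₂ a₃) (eulerF₁ a₁ a₂ a₃) x i = a₁ * eulerX a₁ a₂ a₃ x i) ∧
    (∀ x i, Pgrad (eulerP'₂ a₁ a₂ a₃) (eulerF₁ a₁ a₂ a₃) x i = a₂ * eulerX a₁ a₂ a₃ x i) ∧
    (∀ x i, Pgrad (eulerP'₃ a₁ a₂ a₃) (eulerF₁ a₁ a₂ a₃) x i = a₃ * eulerX a₁ a₂ a₃ x i) ∧
    (∀ x i, Pgrad (eulerP'₁ a₁ a₂ a₃) eulerF₂ x i = 2 * eulerX a₁ a₂ a₃ x i) ∧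
    (∀ x i, Pgrad (eulerP'₂ a₁ a₂ a₃) eulerF₂ x i = 2 * eulerX a₁ a₂ a₃ x i) ∧
    (∀ x i, Pgrad (eulerP'₃ a₁ a₂ a₃) eulerF₂ x i = 2 * eulerX a₁ a₂ a₃ x i) ∧
    (∀ l₁ l₂ l₃ : ℝ, ∀ x, ∀ i j k : Fin 3,
      jacobiator (fun y => l₁ • eulerP'₁ a₁ a₂ a₃ y + l₂ • eulerP'₂ a₁ a₂ a₃ y
        + l₃ • eulerP'₃ a₁ a₂ a₃ y) x i j k = 0) := by
  refine ⟨eulerP'_linear_relation a₁ a₂ a₃, fun x i => ?_, fun x i => ?_, fun x i => ?_,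
    fun x i => ?_, fun x i => ?_, fun x i => ?_, jacobiator_eulerP'_combination a₁ a₂ a₃⟩
  · rw [eulerP'₁_eq_crossMatrix]; exact congrFun (Pgrad_crossMatrix_eulerF₁ a₁ a₂ a₃ a₁ x) i
  · rw [eulerP'₂_eq_crossMatrix]; exact congrFun (Pgrad_crossMatrix_eulerF₁ a₁ a₂ a₃ a₂ x) i
  · rw [eulerP'₃_eq_crossMatrix]; exact congrFun (Pgrad_crossMatrix_eulerF₁ a₁ a₂ a₃ a₃ x) i
  · rw [eulerP'₁_eq_crossMatrix]; exact congrFun (Pgrad_crossMatrix_eulerF₂ a₁ a₂ a₃ a₁ x) i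
  · rw [eulerP'₂_eq_crossMatrix]; exact congrFun (Pgrad_crossMatrix_eulerF₂ a₁ a₂ a₃ a₂ x) i
  · rw [eulerP'₃_eq_crossMatrix]; exact congrFun (Pgrad_crossMatrix_eulerF₂ a₁ a₂ a₃ a₃ x) i
end
end
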